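/- Let G be a countable group, ν a symmetric probability measure on ℤ satisfying ν(n) ≤ C_1 ν(m) for all 0 ≤ m ≤ n, s ∈ G a distinguished element, E_{s,ν} the associated Dirichlet form, and G_ν the truncated second moment of ν. Then for any two finitely supported functions f, g on G, any x ∈ G and y ∈ ℤ, |f∗g(xs^y) − f∗g(x)|² ≤ C_ν (G_ν(|y|))^{-1} y² · E_{s,ν}(f,f) · ‖g‖_2². -/

import Mathlib

/-!
Write `D(m) = ‖f(· s^m) − f‖₂²`. Telescoping and Cauchy–Schwarz give `D(k n + r) ≤ 2 k² D(n) + 2 D(r)`.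
For `1 ≤ n ≤ y` take `k = y / n` and `r = y % n`; as `r < n`, `ν(n) ≤ C₁ ν(r)`, hence
`n² ν(n) D(y) ≤ 2 y² ν(n) D(n) + 2 C₁ n² ν(r) D(r)`. Summing over `n`, the first terms are
controlled by `Σ ν(n) D(n) = 2 E_{s,ν}(f,f)`; in the second, every `n` with `y % n = r` divides
`y − r`, and `Σ_{d ∣ M} d² ≤ M² Σ 1/d² ≤ 2 M²`. This gives `G_ν(|y|) D(y) ≲ y² E_{s,ν}(f,f)`.
Finally `f∗g(xs^y) − f∗g(x) = Σ_z (f(z⁻¹x s^y) − f(z⁻¹x)) g(z)`, so Cauchy–Schwarz bounds its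
square by `D(y) ‖g‖₂²`.
-/

/-- The Dirichlet form `E_{s,ν}(f,f) = (1/2) Σ_{x∈G, z∈ℤ} |f(xs^z) − f(x)|² ν(z)`. -/
noncomputable def dirichletForm {G : Type*} [Group G] (s : G) (ν : ℤ → ℝ) (f : G → ℝ) : ℝ :=
  (1 / 2) * ∑' p : G × ℤ, (f (p.1 * s ^ p.2) - f p.1) ^ 2 * ν p.2

/-- The truncated second moment `G_ν(m) = Σ_{|n| ≤ m} n² ν(n)`. -/
noncomputable def truncMoment (ν : ℤ → ℝ) (m : ℤ) : ℝ :=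
  ∑' n : ℤ, if |n| ≤ m then (n : ℝ) ^ 2 * ν n else 0

/-- Convolution on a group: `f∗g(x) = Σ_{z∈G} f(z⁻¹x) g(z)`. -/
noncomputable def conv {G : Type*} [Group G] (f g : G → ℝ) (x : G) : ℝ :=
  ∑' z : G, f (z⁻¹ * x) * g z

open Finset Function

lemma summable_sq_of_finite_support {α : Type*} {u : α → ℝ} (hu : (support u).Finite) :
    Summable fun x => u x ^ 2 :=
  summable_of_hasFiniteSupport (hu.subset fun x hx => by simpa using hx)

lemma tsum_sq_sum_le {α ι : Type*} (t : Finset ι) {u : ι → α → ℝ}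
    (hu : ∀ i ∈ t, Summable fun x => u i x ^ 2) :
    ∑' x, (∑ i ∈ t, u i x) ^ 2 ≤ #t * ∑ i ∈ t, ∑' x, u i x ^ 2 := by
  have hsum : Summable fun x => (#t : ℝ) * ∑ i ∈ t, u i x ^ 2 :=
    (summable_sum hu).mul_left _
  calc ∑' x, (∑ i ∈ t, u i x) ^ 2 ≤ ∑' x, (#t : ℝ) * ∑ i ∈ t, u i x ^ 2 :=
        Summable.tsum_le_tsum (fun x => sq_sum_le_card_mul_sum_sq)
          (hsum.of_nonneg_of_le (fun _ => sq_nonneg _) fun x => sq_sum_le_card_mul_sum_sq) hsum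
    _ = #t * ∑ i ∈ t, ∑' x, u i x ^ 2 := by
        rw [tsum_mul_left, Summable.tsum_finsetSum hu]

section Translation

variable {G : Type*} [Group G] {f : G → ℝ}

lemma summable_sq_sub_comp_mul_right (hf : (support f).Finite) (a b : G) :
    Summable fun x => (f (x * a) - f (x * b)) ^ 2 := by
  refine summable_of_hasFiniteSupport (((hf.preimage (mul_left_injective a).injOn).union
    (hf.preimage (mul_left_injective b).injOn)).subset fun x hx => ?_)
  by_contra h
  simp_all

noncomputable def translateSqDist (s : G) (f : G → ℝ) (m : ℤ) : ℝ :=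
  ∑' x, (f (x * s ^ m) - f x) ^ 2

lemma translateSqDist_nonneg (s : G) (f : G → ℝ) (m : ℤ) : 0 ≤ translateSqDist s f m :=
  tsum_nonneg fun _ => sq_nonneg _

lemma summable_translateSqDist (hf : (support f).Finite) (s : G) (m : ℤ) :
    Summable fun x => (f (x * s ^ m) - f x) ^ 2 := by
  simpa using summable_sq_sub_comp_mul_right hf (s ^ m) 1

lemma translateSqDist_neg (s : G) (f : G → ℝ) (m : ℤ) :
    translateSqDist s f (-m) = translateSqDist s f m := by
  rw [translateSqDist, ← (Equiv.mulRight (s ^ m)).tsum_eq]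
  refine tsum_congr fun x => ?_
  simp only [Equiv.coe_mulRight, mul_assoc, ← zpow_add, add_neg_cancel, zpow_zero, mul_one]
  ring

lemma translateSqDist_natAbs (s : G) (f : G → ℝ) (m : ℤ) :
    translateSqDist s f m.natAbs = translateSqDist s f m := by
  rcases Int.natAbs_eq m with h | h <;> nth_rw 2 [h]
  rw [translateSqDist_neg]

lemma translateSqDist_sum_le (hf : (support f).Finite) (s : G) (m : ℕ → ℤ) (k : ℕ) :
    translateSqDist s f (∑ j ∈ range k, m j) ≤ k * ∑ j ∈ range k, translateSqDist s f (m j) := by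
  set P : ℕ → G := fun j => s ^ ∑ i ∈ range j, m i
  have hP : ∀ j, P (j + 1) = P j * s ^ m j := fun j => by simp [P, sum_range_succ, zpow_add]
  have htel : ∀ x, f (x * s ^ ∑ j ∈ range k, m j) - f x =
      ∑ j ∈ range k, (f (x * P j * s ^ m j) - f (x * P j)) := fun x => by
    simpa [mul_assoc, ← hP, P] using (sum_range_sub (fun j => f (x * P j)) k).symm
  have hshift : ∀ j, ∑' x, (f (x * P j * s ^ m j) - f (x * P j)) ^ 2 =
      translateSqDist s f (m j) := fun j =>
    (Equiv.mulRight (P j)).tsum_eq fun x => (f (x * s ^ m j) - f x) ^ 2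
  have hsum : ∀ j, Summable fun x => (f (x * P j * s ^ m j) - f (x * P j)) ^ 2 := fun j => by
    simpa [mul_assoc] using summable_sq_sub_comp_mul_right hf (P j * s ^ m j) (P j)
  simpa [translateSqDist, htel, hshift] using tsum_sq_sum_le (range k) fun j _ => hsum j

lemma translateSqDist_add_le (hf : (support f).Finite) (s : G) (a b : ℤ) :
    translateSqDist s f (a + b) ≤ 2 * (translateSqDist s f a + translateSqDist s f b) := by
  simpa [sum_range_succ] using translateSqDist_sum_le hf s (fun j => if j = 0 then a else b) 2

lemma translateSqDist_mul_le (hf : (support f).Finite) (s : G) (k : ℕ) (n : ℤ) :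
    translateSqDist s f (k * n) ≤ k ^ 2 * translateSqDist s f n := by
  simpa [sq, mul_assoc] using translateSqDist_sum_le hf s (fun _ => n) k

lemma translateSqDist_le_div_mod (hf : (support f).Finite) (s : G) (y n : ℕ) :
    translateSqDist s f y ≤
      2 * ((y / n : ℕ) ^ 2 * translateSqDist s f n) + 2 * translateSqDist s f (y % n : ℕ) := by
  have hy : (y : ℤ) = (y / n : ℕ) * n + (y % n : ℕ) := by
    exact_mod_cast (Nat.div_add_mod' y n).symm
  rw [hy]
  linarith [translateSqDist_add_le hf s ((y / n : ℕ) * n) (y % n : ℕ),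
    translateSqDist_mul_le hf s (y / n) n]

end Translation

section DirichletForm

variable {G : Type*} [Group G] {f : G → ℝ} {ν : ℤ → ℝ}

lemma translateSqDist_le_four_mul (hf : (support f).Finite) (s : G) (m : ℤ) :
    translateSqDist s f m ≤ 4 * ∑' x, f x ^ 2 := by
  have h0 := summable_sq_of_finite_support hf
  have hm : Summable fun x => f (x * s ^ m) ^ 2 := (Equiv.mulRight (s ^ m)).summable_iff.2 h0
  have hshift : ∑' x, f (x * s ^ m) ^ 2 = ∑' x, f x ^ 2 :=
    (Equiv.mulRight (s ^ m)).tsum_eq fun x => f x ^ 2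
  calc translateSqDist s f m ≤ ∑' x, (2 * f (x * s ^ m) ^ 2 + 2 * f x ^ 2) :=
        Summable.tsum_le_tsum (fun x => by nlinarith [sq_nonneg (f (x * s ^ m) + f x)])
          (summable_translateSqDist hf s m) ((hm.mul_left 2).add (h0.mul_left 2))
    _ = 4 * ∑' x, f x ^ 2 := by
        rw [(hm.mul_left 2).tsum_add (h0.mul_left 2), tsum_mul_left, tsum_mul_left, hshift]
        ring

lemma hasSum_mul_translateSqDist (hf : (support f).Finite) (s : G) (hν0 : ∀ n, 0 ≤ ν n)
    (hν : Summable ν) :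
    HasSum (fun n => ν n * translateSqDist s f n) (2 * dirichletForm s ν f) := by
  set F : ℤ × G → ℝ := fun q => ν q.1 * (f (q.2 * s ^ q.1) - f q.2) ^ 2
  have hfiber (n : ℤ) : HasSum (fun x => F (n, x)) (ν n * translateSqDist s f n) :=
    (summable_translateSqDist hf s n).hasSum.mul_left (ν n)
  have hF : Summable F := by
    refine (summable_prod_of_nonneg fun q => mul_nonneg (hν0 _) (sq_nonneg _)).2
      ⟨fun n => (hfiber n).summable, ?_⟩
    refine (hν.mul_right (4 * ∑' x, f x ^ 2)).of_nonneg_of_le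
      (fun n => (hfiber n).tsum_eq ▸ mul_nonneg (hν0 n) (translateSqDist_nonneg s f n))
      fun n => (hfiber n).tsum_eq ▸ mul_le_mul_of_nonneg_left (translateSqDist_le_four_mul hf s n) (hν0 n)
  have htsum : ∑' q, F q = 2 * dirichletForm s ν f := by
    rw [dirichletForm, ← (Equiv.prodComm G ℤ).tsum_eq]
    simp only [F, Equiv.prodComm_apply, Prod.fst_swap, Prod.snd_swap, mul_comm (ν _)]
    ring
  exact (htsum ▸ hF.hasSum).prod_fiberwise hfiber

lemma sum_mul_translateSqDist_le (hf : (support f).Finite) (s : G) (hν0 : ∀ n, 0 ≤ ν n)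
    (hν : Summable ν) (t : Finset ℕ) :
    ∑ n ∈ t, ν n * translateSqDist s f n ≤ 2 * dirichletForm s ν f := by
  simpa using sum_le_hasSum (t.map Nat.castEmbedding)
    (fun n _ => mul_nonneg (hν0 n) (translateSqDist_nonneg s f n))
    (hasSum_mul_translateSqDist hf s hν0 hν)

end DirichletForm

lemma sum_sq_divisors_le (M : ℕ) : ∑ d ∈ M.divisors, (d : ℝ) ^ 2 ≤ 2 * M ^ 2 := by
  rw [← Nat.sum_div_divisors]
  have hsub : M.divisors ⊆ Ioo 0 (M + 1) := fun d hd =>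
    mem_Ioo.2 ⟨Nat.pos_of_mem_divisors hd, Nat.lt_succ_of_le (Nat.divisor_le hd)⟩
  calc ∑ d ∈ M.divisors, ((M / d : ℕ) : ℝ) ^ 2 = M ^ 2 * ∑ d ∈ M.divisors, ((d : ℝ) ^ 2)⁻¹ := by
        rw [mul_sum]
        refine sum_congr rfl fun d hd => ?_
        rw [Nat.cast_div (Nat.dvd_of_mem_divisors hd) (by exact_mod_cast (Nat.pos_of_mem_divisors hd).ne'),
          div_pow, div_eq_mul_inv]
    _ ≤ M ^ 2 * ∑ d ∈ Ioo 0 (M + 1), ((d : ℝ) ^ 2)⁻¹ := by gcongr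
    _ ≤ M ^ 2 * 2 := by
        gcongr
        simpa using sum_Ioo_inv_sq_le (α := ℝ) 0 (M + 1)
    _ = 2 * M ^ 2 := mul_comm _ _

lemma sum_sq_mul_mod_le (y : ℕ) {a : ℕ → ℝ} (ha : ∀ r, 0 ≤ a r) :
    ∑ n ∈ Icc 1 y, (n : ℝ) ^ 2 * a (y % n) ≤ 2 * y ^ 2 * ∑ r ∈ range y, a r := by
  have hmaps : ∀ n ∈ Icc 1 y, y % n ∈ range y := fun n hn => by
    rw [mem_Icc] at hn
    exact mem_range.2 ((Nat.mod_lt y hn.1).trans_le hn.2)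
  rw [← sum_fiberwise_of_maps_to hmaps, mul_sum]
  refine sum_le_sum fun r hr => ?_
  have hry : r < y := mem_range.1 hr
  have hfiber : {n ∈ Icc 1 y | y % n = r} ⊆ (y - r).divisors := fun n hn => by
    rw [mem_filter] at hn
    exact Nat.mem_divisors.2 ⟨hn.2 ▸ Nat.dvd_sub_mod y, by omega⟩
  calc ∑ n ∈ Icc 1 y with y % n = r, (n : ℝ) ^ 2 * a (y % n)
      = (∑ n ∈ Icc 1 y with y % n = r, (n : ℝ) ^ 2) * a r := by
        rw [sum_mul]
        exact sum_congr rfl fun n hn => by rw [(mem_filter.1 hn).2]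
    _ ≤ (2 * ((y - r : ℕ) : ℝ) ^ 2) * a r := by
        gcongr ?_ * _
        · exact ha r
        exact (sum_le_sum_of_subset_of_nonneg hfiber fun _ _ _ => by positivity).trans
          (sum_sq_divisors_le _)
    _ ≤ 2 * y ^ 2 * a r := by
        gcongr 2 * ?_ ^ 2 * _
        · exact ha r
        exact_mod_cast Nat.sub_le y r

section PseudoPoincare

variable {G : Type*} [Group G] {f : G → ℝ} {ν : ℤ → ℝ} {C : ℝ}

lemma sq_mul_translateSqDist_le (hf : (support f).Finite) (s : G) (hν0 : ∀ n, 0 ≤ ν n)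
    (hmono : ∀ m n : ℕ, m ≤ n → ν n ≤ C * ν m) {y n : ℕ} (hn : 0 < n) :
    (n : ℝ) ^ 2 * ν n * translateSqDist s f y ≤
      2 * y ^ 2 * (ν n * translateSqDist s f n) +
        2 * C * ((n : ℝ) ^ 2 * (ν (y % n : ℕ) * translateSqDist s f (y % n : ℕ))) := by
  have hquot : ((y / n : ℕ) : ℝ) * n ≤ y := by exact_mod_cast Nat.div_mul_le_self y n
  have hrem : ν n ≤ C * ν (y % n : ℕ) := hmono _ _ (Nat.mod_lt y hn).le
  have := translateSqDist_nonneg s f n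
  have := translateSqDist_nonneg s f (y % n : ℕ)
  have := hν0 n
  calc (n : ℝ) ^ 2 * ν n * translateSqDist s f y
      ≤ (n : ℝ) ^ 2 * ν n * (2 * ((y / n : ℕ) ^ 2 * translateSqDist s f n) +
          2 * translateSqDist s f (y % n : ℕ)) := by
        gcongr
        exact translateSqDist_le_div_mod hf s y n
    _ = 2 * (((y / n : ℕ) : ℝ) * n) ^ 2 * (ν n * translateSqDist s f n) +
          2 * (n : ℝ) ^ 2 * (ν n * translateSqDist s f (y % n : ℕ)) := by ring
    _ ≤ 2 * (y : ℝ) ^ 2 * (ν n * translateSqDist s f n) +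
          2 * (n : ℝ) ^ 2 * (C * ν (y % n : ℕ) * translateSqDist s f (y % n : ℕ)) := by
        gcongr
    _ = _ := by ring

lemma sum_sq_mul_mul_translateSqDist_le (hf : (support f).Finite) (s : G)
    (hν0 : ∀ n, 0 ≤ ν n) (hν : Summable ν) (hC : 0 ≤ C)
    (hmono : ∀ m n : ℕ, m ≤ n → ν n ≤ C * ν m) (y : ℕ) :
    (∑ n ∈ Icc 1 y, (n : ℝ) ^ 2 * ν n) * translateSqDist s f y ≤
      4 * (1 + 2 * C) * y ^ 2 * dirichletForm s ν f := by
  set a : ℕ → ℝ := fun r => ν r * translateSqDist s f r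
  have ha (r : ℕ) : 0 ≤ a r := mul_nonneg (hν0 r) (translateSqDist_nonneg s f r)
  have hE := sum_mul_translateSqDist_le hf s hν0 hν
  calc (∑ n ∈ Icc 1 y, (n : ℝ) ^ 2 * ν n) * translateSqDist s f y
      ≤ ∑ n ∈ Icc 1 y, (2 * y ^ 2 * a n + 2 * C * ((n : ℝ) ^ 2 * a (y % n))) := by
        rw [sum_mul]
        exact sum_le_sum fun n hn =>
          sq_mul_translateSqDist_le hf s hν0 hmono (mem_Icc.1 hn).1
    _ = 2 * y ^ 2 * ∑ n ∈ Icc 1 y, a n + 2 * C * ∑ n ∈ Icc 1 y, (n : ℝ) ^ 2 * a (y % n) := by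
        rw [sum_add_distrib, mul_sum, mul_sum]
    _ ≤ 2 * y ^ 2 * (2 * dirichletForm s ν f) +
          2 * C * (2 * y ^ 2 * (2 * dirichletForm s ν f)) := by
        gcongr
        · exact hE _
        · exact (sum_sq_mul_mod_le y ha).trans (by gcongr; exact hE _)
    _ = 4 * (1 + 2 * C) * y ^ 2 * dirichletForm s ν f := by ring

lemma truncMoment_natCast (hsym : ∀ n, ν (-n) = ν n) (Y : ℕ) :
    truncMoment ν Y = 2 * ∑ n ∈ Icc 1 Y, (n : ℝ) ^ 2 * ν n := by
  set h : ℤ → ℝ := fun n => if |n| ≤ Y then (n : ℝ) ^ 2 * ν n else 0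
  have heven : h.Even := fun n => by simp [h, hsym]
  have hsum : Summable h := summable_of_hasFiniteSupport ((Set.finite_Icc (-(Y : ℤ)) Y).subset
    fun n hn => by
      by_contra hn'
      simp_all [h, abs_le])
  have hnat : ∑' n : ℕ, h n = ∑ n ∈ Icc 1 Y, (n : ℝ) ^ 2 * ν n := by
    rw [tsum_eq_sum (s := Icc 1 Y)]
    · exact sum_congr rfl fun n hn => if_pos (by simpa using (mem_Icc.1 hn).2)
    · intro n hn
      simp only [mem_Icc, not_and_or, not_le] at hn
      rcases hn with hn | hn
      · simp [h, Nat.lt_one_iff.1 hn]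
      · simp [h, hn]
  rw [truncMoment, tsum_int_eq_zero_add_two_mul_tsum_pnat heven hsum, ← hnat,
    ← tsum_zero_pnat_eq_tsum_nat (f := fun n : ℕ => h n) (hsum.comp_injective Nat.cast_injective)]
  simp [h]

lemma translateSqDist_mul_truncMoment_le (hf : (support f).Finite) (s : G) (hν0 : ∀ n, 0 ≤ ν n)
    (hsym : ∀ n, ν (-n) = ν n) (hν : Summable ν) (hC : 0 ≤ C)
    (hmono : ∀ m n : ℕ, m ≤ n → ν n ≤ C * ν m) (y : ℤ) :
    translateSqDist s f y * truncMoment ν |y| ≤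
      8 * (1 + 2 * C) * y ^ 2 * dirichletForm s ν f := by
  have hy : ((y.natAbs : ℕ) : ℝ) ^ 2 = (y : ℝ) ^ 2 := by
    rw [Nat.cast_natAbs, Int.cast_abs, sq_abs]
  rw [← translateSqDist_natAbs, Int.abs_eq_natAbs, truncMoment_natCast hsym, ← hy]
  linarith [sum_sq_mul_mul_translateSqDist_le hf s hν0 hν hC hmono y.natAbs]

end PseudoPoincare

lemma sq_conv_sub_le {G : Type*} [Group G] {f g : G → ℝ} (hf : (support f).Finite)
    (hg : (support g).Finite) (s x : G) (y : ℤ) :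
    (conv f g (x * s ^ y) - conv f g x) ^ 2 ≤ translateSqDist s f y * ∑' z, g z ^ 2 := by
  set T := hg.toFinset
  have hconv (w : G) : conv f g w = ∑ z ∈ T, f (z⁻¹ * w) * g z :=
    tsum_eq_sum fun z hz => by simp_all [T]
  have hdiff : conv f g (x * s ^ y) - conv f g x =
      ∑ z ∈ T, (f (z⁻¹ * x * s ^ y) - f (z⁻¹ * x)) * g z := by
    rw [hconv, hconv, ← sum_sub_distrib]
    exact sum_congr rfl fun z _ => by rw [mul_assoc, sub_mul]
  let e : G ≃ G := (Equiv.inv G).trans (Equiv.mulRight x)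
  have hf' : ∑ z ∈ T, (f (z⁻¹ * x * s ^ y) - f (z⁻¹ * x)) ^ 2 ≤ translateSqDist s f y := by
    rw [translateSqDist, ← e.tsum_eq]
    exact Summable.sum_le_tsum T (fun _ _ => sq_nonneg _)
      ((summable_translateSqDist hf s y).comp_injective e.injective)
  have hg' : ∑ z ∈ T, g z ^ 2 ≤ ∑' z, g z ^ 2 :=
    Summable.sum_le_tsum T (fun _ _ => sq_nonneg _) (summable_sq_of_finite_support hg)
  rw [hdiff]
  exact (sum_mul_sq_le_sq_mul_sq T _ g).trans
    (mul_le_mul hf' hg' (sum_nonneg fun _ _ => sq_nonneg _) (translateSqDist_nonneg s f y))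

/-- Under the hypotheses of the one-dimensional
pseudo-Poincaré inequality (symmetric essentially decreasing probability
measure `ν` on `ℤ`, distinguished element `s` of a countable group `G`), for
any two finitely supported functions `f, g`, any `x ∈ G` and `y ∈ ℤ`,
`|f∗g(xs^y) − f∗g(x)|² · G_ν(|y|) ≤ C_ν · y² · E_{s,ν}(f,f) · ‖g‖₂²`
(cleared-denominator form of
`|f∗g(xs^y) − f∗g(x)|² ≤ C_ν (G_ν(|y|))⁻¹ y² E_{s,ν}(f,f) ‖g‖₂²`). -/
theorem statement3 (C₁ : ℝ) :
    ∃ Cν : ℝ, 0 < Cν ∧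
      ∀ {G : Type} [Group G] [Countable G] (s : G) (ν : ℤ → ℝ),
        (∀ n, 0 ≤ ν n) →
        (∀ n, ν (-n) = ν n) →
        (∑' n : ℤ, ν n) = 1 →
        (∀ m n : ℤ, 0 ≤ m → m ≤ n → ν n ≤ C₁ * ν m) →
        ∀ f g : G → ℝ, (Function.support f).Finite → (Function.support g).Finite →
          ∀ (x : G) (y : ℤ),
            (conv f g (x * s ^ y) - conv f g x) ^ 2 * truncMoment ν |y| ≤
              Cν * (y : ℝ) ^ 2 * dirichletForm s ν f * (∑' z : G, (g z) ^ 2) := by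
  refine ⟨8 * (1 + 2 * max C₁ 0), by positivity, ?_⟩
  intro G _ _ s ν hν0 hsym hν1 hmono f g hf hg x y
  have hν : Summable ν := by
    by_contra h
    simp [tsum_eq_zero_of_not_summable h] at hν1
  have hmono' (m n : ℕ) (hmn : m ≤ n) : ν n ≤ max C₁ 0 * ν m :=
    (hmono m n (Int.natCast_nonneg m) (by exact_mod_cast hmn)).trans
      (mul_le_mul_of_nonneg_right (le_max_left _ _) (hν0 m))
  have htrunc : 0 ≤ truncMoment ν |y| :=
    tsum_nonneg fun n => by split_ifs <;> [exact mul_nonneg (sq_nonneg _) (hν0 n); rfl]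
  calc (conv f g (x * s ^ y) - conv f g x) ^ 2 * truncMoment ν |y|
      ≤ translateSqDist s f y * (∑' z, g z ^ 2) * truncMoment ν |y| := by
        gcongr
        exact sq_conv_sub_le hf hg s x y
    _ = translateSqDist s f y * truncMoment ν |y| * ∑' z, g z ^ 2 := by ring
    _ ≤ _ := mul_le_mul_of_nonneg_right
        (translateSqDist_mul_truncMoment_le hf s hν0 hsym hν (le_max_right _ _) hmono' y)
        (tsum_nonneg fun _ => sq_nonneg _)
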